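/- If the marginal of a binary nuisance factor Y^i shifts between domains while the generative model is shared, then the target-domain equalized-odds violation decomposes as Δ_odds^T ≤ P_T(Y^i=0)·Δ_0 + P_T(Y^i=1)·Δ_1, where Δ_v is the (domain-independent) conditional equalized-odds violation given Y^i = v. In particular, if Δ_0 = 0 and Δ_1 = δ > 0, then Δ_odds^S ≤ P_S(Y^i=1)·δ and Δ_odds^T ≤ P_T(Y^i=1)·δ, so a model can have arbitrarily small source unfairness while target unfairness can be as large as P_T(Y^i=1)·δ. -/
import Mathlib


open scoped Classical

open Finset

/-- Joint probability of an event under the latent variable model with independent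
factors: label `Y : Bool`, sensitive attribute `A : Bool`, a binary nuisance factor
`V : Bool`, remaining factors `R`, and observation `X` generated by `gen`. -/
noncomputable def jointP {R X : Type} [Fintype R] [Fintype X]
    (pY pA pV : Bool → ℝ) (pR : R → ℝ)
    (gen : Bool → Bool → Bool → R → X → ℝ)
    (E : Bool → Bool → Bool → R → X → Prop) : ℝ :=
  ∑ y, ∑ a, ∑ v, ∑ r, ∑ x,
    if E y a v r x then pY y * pA a * pV v * pR r * gen y a v r x else 0

/-- Equalized odds violation under priors `(pY, pA, pV, pR)`. -/
noncomputable def deltaOdds {R X : Type} [Fintype R] [Fintype X]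
    (pY pA pV : Bool → ℝ) (pR : R → ℝ)
    (gen : Bool → Bool → Bool → R → X → ℝ) (f : X → Bool) : ℝ :=
  (1 / 2) * ∑ y : Bool,
    |jointP pY pA pV pR gen (fun y' a' _ _ x => y' = y ∧ a' = false ∧ f x = y) /
        jointP pY pA pV pR gen (fun y' a' _ _ _ => y' = y ∧ a' = false)
      - jointP pY pA pV pR gen (fun y' a' _ _ x => y' = y ∧ a' = true ∧ f x = y) /
        jointP pY pA pV pR gen (fun y' a' _ _ _ => y' = y ∧ a' = true)|

/-- Conditional equalized odds violation given value `v` of the binary nuisance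
factor; by the shared generative model and independence this does not depend on
the domain's nuisance marginal. -/
noncomputable def deltaOddsCond {R X : Type} [Fintype R] [Fintype X]
    (pY pA pV : Bool → ℝ) (pR : R → ℝ)
    (gen : Bool → Bool → Bool → R → X → ℝ) (f : X → Bool) (v : Bool) : ℝ :=
  (1 / 2) * ∑ y : Bool,
    |jointP pY pA pV pR gen (fun y' a' v' _ x => y' = y ∧ a' = false ∧ v' = v ∧ f x = y) /
        jointP pY pA pV pR gen (fun y' a' v' _ _ => y' = y ∧ a' = false ∧ v' = v)
      - jointP pY pA pV pR gen (fun y' a' v' _ x => y' = y ∧ a' = true ∧ v' = v ∧ f x = y) /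
        jointP pY pA pV pR gen (fun y' a' v' _ _ => y' = y ∧ a' = true ∧ v' = v)|


noncomputable def Gfun {R X : Type} [Fintype R] [Fintype X]
    (pR : R → ℝ) (gen : Bool → Bool → Bool → R → X → ℝ) (f : X → Bool)
    (y a v : Bool) : ℝ :=
  ∑ r, ∑ x, if f x = y then pR r * gen y a v r x else 0

section Aux
variable {R X : Type} [Fintype R] [Fintype X]
    (pY pA pV : Bool → ℝ) (pR : R → ℝ)
    (gen : Bool → Bool → Bool → R → X → ℝ) (f : X → Bool)

lemma jointP_num (y a : Bool) :
    jointP pY pA pV pR gen (fun y' a' _ _ x => y' = y ∧ a' = a ∧ f x = y)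
      = pY y * pA a * ∑ v, pV v * Gfun pR gen f y a v := by
  unfold jointP
  cases y <;> cases a <;>
    simp [Fintype.sum_bool, Gfun, Finset.mul_sum, mul_ite, mul_zero, mul_assoc, mul_add]

lemma sum_rx (hR1 : ∑ r, pR r = 1) (hgen1 : ∀ y a v r, ∑ x, gen y a v r x = 1)
    (y a v : Bool) :
    (∑ r, ∑ x, pY y * pA a * pV v * pR r * gen y a v r x) = pY y * pA a * pV v := by
  simp only [← Finset.mul_sum, hgen1, mul_one, hR1]

lemma jointP_den (hR1 : ∑ r, pR r = 1) (hgen1 : ∀ y a v r, ∑ x, gen y a v r x = 1)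
    (hV1 : ∑ v, pV v = 1) (y a : Bool) :
    jointP pY pA pV pR gen (fun y' a' _ _ _ => y' = y ∧ a' = a) = pY y * pA a := by
  unfold jointP
  have h := sum_rx pY pA pV pR gen
  rw [Fintype.sum_bool] at hV1
  cases y <;> cases a <;>
    simp only [Fintype.sum_bool, and_true, and_false, if_true, if_false,
      Finset.sum_const_zero, add_zero, zero_add, Bool.true_eq_false, Bool.false_eq_true,
      and_self, ite_self, if_neg, not_false_iff] <;>
    · rw [h hR1 hgen1, h hR1 hgen1, ← mul_add, hV1, mul_one]

lemma jointP_cnum (y a v : Bool) :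
    jointP pY pA pV pR gen (fun y' a' v' _ x => y' = y ∧ a' = a ∧ v' = v ∧ f x = y)
      = pY y * pA a * pV v * Gfun pR gen f y a v := by
  unfold jointP
  cases y <;> cases a <;> cases v <;>
    simp [Fintype.sum_bool, Gfun, Finset.mul_sum, mul_ite, mul_zero, mul_assoc, mul_add]

lemma jointP_cden (hR1 : ∑ r, pR r = 1) (hgen1 : ∀ y a v r, ∑ x, gen y a v r x = 1)
    (y a v : Bool) :
    jointP pY pA pV pR gen (fun y' a' v' _ _ => y' = y ∧ a' = a ∧ v' = v)
      = pY y * pA a * pV v := by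
  unfold jointP
  have h := sum_rx pY pA pV pR gen hR1 hgen1
  cases y <;> cases a <;> cases v <;>
    simp [Fintype.sum_bool, h]

lemma cond_eq (hR1 : ∑ r, pR r = 1) (hgen1 : ∀ y a v r, ∑ x, gen y a v r x = 1)
    (hYpos : ∀ y, 0 < pY y) (hApos : ∀ a, 0 < pA a) (hVpos : ∀ v, 0 < pV v) (v : Bool) :
    deltaOddsCond pY pA pV pR gen f v
      = (1/2) * ∑ y : Bool, |Gfun pR gen f y false v - Gfun pR gen f y true v| := by
  unfold deltaOddsCond
  congr 1
  apply Finset.sum_congr rfl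
  intro y _
  rw [jointP_cnum pY pA pV pR gen f y false v, jointP_cden pY pA pV pR gen hR1 hgen1 y false v,
    jointP_cnum pY pA pV pR gen f y true v, jointP_cden pY pA pV pR gen hR1 hgen1 y true v,
    mul_div_cancel_left₀ _ (mul_pos (mul_pos (hYpos y) (hApos false)) (hVpos v)).ne',
    mul_div_cancel_left₀ _ (mul_pos (mul_pos (hYpos y) (hApos true)) (hVpos v)).ne']

lemma odds_eq (hR1 : ∑ r, pR r = 1) (hgen1 : ∀ y a v r, ∑ x, gen y a v r x = 1)
    (hV1 : ∑ v, pV v = 1)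
    (hYpos : ∀ y, 0 < pY y) (hApos : ∀ a, 0 < pA a) :
    deltaOdds pY pA pV pR gen f
      = (1/2) * ∑ y : Bool,
          |(∑ v, pV v * Gfun pR gen f y false v) - (∑ v, pV v * Gfun pR gen f y true v)| := by
  unfold deltaOdds
  congr 1
  apply Finset.sum_congr rfl
  intro y _
  rw [jointP_num pY pA pV pR gen f y false, jointP_den pY pA pV pR gen hR1 hgen1 hV1 y false,
    jointP_num pY pA pV pR gen f y true, jointP_den pY pA pV pR gen hR1 hgen1 hV1 y true,
    mul_div_cancel_left₀ _ (mul_pos (hYpos y) (hApos false)).ne',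
    mul_div_cancel_left₀ _ (mul_pos (hYpos y) (hApos true)).ne']

lemma decomp (hR1 : ∑ r, pR r = 1) (hgen1 : ∀ y a v r, ∑ x, gen y a v r x = 1)
    (hV1 : ∑ v, pV v = 1)
    (hYpos : ∀ y, 0 < pY y) (hApos : ∀ a, 0 < pA a) (hVpos : ∀ v, 0 < pV v) :
    deltaOdds pY pA pV pR gen f
      ≤ pV false * deltaOddsCond pY pA pV pR gen f false
        + pV true * deltaOddsCond pY pA pV pR gen f true := by
  rw [odds_eq pY pA pV pR gen f hR1 hgen1 hV1 hYpos hApos,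
    cond_eq pY pA pV pR gen f hR1 hgen1 hYpos hApos hVpos false,
    cond_eq pY pA pV pR gen f hR1 hgen1 hYpos hApos hVpos true]
  have key : ∀ y : Bool,
      |(∑ v, pV v * Gfun pR gen f y false v) - (∑ v, pV v * Gfun pR gen f y true v)|
        ≤ pV false * |Gfun pR gen f y false false - Gfun pR gen f y true false|
          + pV true * |Gfun pR gen f y false true - Gfun pR gen f y true true| := by
    intro y
    rw [Fintype.sum_bool, Fintype.sum_bool]
    have h1 : pV true * Gfun pR gen f y false true + pV false * Gfun pR gen f y false false
        - (pV true * Gfun pR gen f y true true + pV false * Gfun pR gen f y true false)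
        = pV false * (Gfun pR gen f y false false - Gfun pR gen f y true false)
          + pV true * (Gfun pR gen f y false true - Gfun pR gen f y true true) := by ring
    rw [h1]
    refine (abs_add_le _ _).trans ?_
    rw [abs_mul, abs_mul, abs_of_nonneg (hVpos false).le, abs_of_nonneg (hVpos true).le]
  have k0 := key false
  have k1 := key true
  simp only [Fintype.sum_bool] at k0 k1 ⊢
  nlinarith [k0, k1]

end Aux

/-- If the marginal of a binary nuisance factor `V` shifts while the
generative model is shared, the target unfairness decomposes as
`Δ_odds^T ≤ P_T(V=0)·Δ_0 + P_T(V=1)·Δ_1` where `Δ_v` is the (domain-independent)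
conditional violation given `V = v`; in particular if `Δ_0 = 0` and `Δ_1 = δ > 0`
then `Δ_odds^S ≤ P_S(V=1)·δ` and `Δ_odds^T ≤ P_T(V=1)·δ`. -/
theorem target_unfairness_decomposes_over_binary_nuisance_factor
    {R X : Type} [Fintype R] [Fintype X]
    (pY pA pVS pVT : Bool → ℝ) (pR : R → ℝ)
    (gen : Bool → Bool → Bool → R → X → ℝ) (f : X → Bool)
    (hY1 : ∑ y, pY y = 1) (hA1 : ∑ a, pA a = 1)
    (hVS1 : ∑ v, pVS v = 1) (hVT1 : ∑ v, pVT v = 1) (hR1 : ∑ r, pR r = 1)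
    (hYpos : ∀ y, 0 < pY y) (hApos : ∀ a, 0 < pA a)
    (hVSpos : ∀ v, 0 < pVS v) (hVTpos : ∀ v, 0 < pVT v) (hRnn : ∀ r, 0 ≤ pR r)
    (hgen1 : ∀ y a v r, ∑ x, gen y a v r x = 1)
    (hgennn : ∀ y a v r x, 0 ≤ gen y a v r x) :
    -- the conditional violations agree across domains,
    (∀ v, deltaOddsCond pY pA pVS pR gen f v = deltaOddsCond pY pA pVT pR gen f v) ∧
    -- the target unfairness decomposes via the law of total probability,
    deltaOdds pY pA pVT pR gen f
      ≤ pVT false * deltaOddsCond pY pA pVS pR gen f false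
        + pVT true * deltaOddsCond pY pA pVS pR gen f true ∧
    -- and in particular, with `Δ_0 = 0` and `Δ_1 = δ > 0`:
    (∀ δ : ℝ, 0 < δ →
      deltaOddsCond pY pA pVS pR gen f false = 0 →
      deltaOddsCond pY pA pVS pR gen f true = δ →
      deltaOdds pY pA pVS pR gen f ≤ pVS true * δ ∧
      deltaOdds pY pA pVT pR gen f ≤ pVT true * δ) := by
  have c1 := cond_eq pY pA pVS pR gen f hR1 hgen1 hYpos hApos hVSpos
  have c2 := cond_eq pY pA pVT pR gen f hR1 hgen1 hYpos hApos hVTpos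
  have hcond : ∀ v, deltaOddsCond pY pA pVS pR gen f v = deltaOddsCond pY pA pVT pR gen f v := by
    intro v; rw [c1 v, c2 v]
  refine ⟨hcond, ?_, ?_⟩
  · have hT := decomp pY pA pVT pR gen f hR1 hgen1 hVT1 hYpos hApos hVTpos
    rw [hcond false, hcond true]
    exact hT
  · intro δ hδ h0 h1
    have hS := decomp pY pA pVS pR gen f hR1 hgen1 hVS1 hYpos hApos hVSpos
    have hT := decomp pY pA pVT pR gen f hR1 hgen1 hVT1 hYpos hApos hVTpos
    rw [h0, h1, mul_zero, zero_add] at hS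
    rw [← hcond false, ← hcond true, h0, h1, mul_zero, zero_add] at hT
    exact ⟨hS, hT⟩
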